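/- Let {(x^k, y^k)} be a sequence generated by the inexact penalty decomposition method, i.e., for every k one has ‖∇_x q_{τ_k}(x^{k+1}, y^{k+1})‖ ≤ δ_k and y^{k+1} ∈ Π_D(x^{k+1}), where {δ_k} ⊆ [0,∞) is bounded and τ_k → ∞ with τ_k > 0. Then every accumulation point (x̄, ȳ) of {(x^k, y^k)} satisfies G'(x̄)*(G(x̄) − P_C(G(x̄))) + x̄ − ȳ = 0 and 0 ∈ ȳ − x̄ + N_D^lim(ȳ); that is, (x̄, ȳ) is an M-stationary point of the feasibility problem: minimize (1/2)dist_C(G(x))² + (1/2)‖x − y‖² subject to y ∈ D. -/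

import Mathlib

/-!
Write `r x = G'(x)* (G x - P_C (G x))`. Since `½ dist_C²` is differentiable with gradient
`w - P_C w` (the projection onto a convex set being nonexpansive), the chain rule gives
`∇ₓ q_τ(x, y) = ∇f(x) + τ (x - y + r x)`. Along the subsequence `∇f(xᵏ)` stays bounded, so
`‖τₖ (xᵏ - yᵏ + r xᵏ)‖` is bounded while `τₖ → ∞`, whence `x̄ - ȳ + r x̄ = 0`.

Nearest points pass to the limit, so `ȳ ∈ Π_D(x̄)`. Then `ȳ` is still a nearest point of every
point of the segment `[ȳ, x̄]`; approaching `ȳ` along it, the rescaled proximal normals are all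
equal to `x̄ - ȳ`, which is therefore a limiting normal at `ȳ`.
-/

open Filter Topology RealInnerProductSpace

noncomputable section

/-- The (set-valued) Euclidean projection of `x` onto `D`:
`Π_D(x) = argmin_{z ∈ D} ‖z - x‖`. -/
def projSet {E : Type*} [NormedAddCommGroup E] (D : Set E) (x : E) : Set E :=
  {z | z ∈ D ∧ ∀ w ∈ D, ‖z - x‖ ≤ ‖w - x‖}

/-- The limiting (Mordukhovich) normal cone to `D` at `x`:
`N_D^lim(x) = limsup_{v → x} cone(v - Π_D(v))`, empty outside `D`. -/
def limNormalCone {E : Type*} [NormedAddCommGroup E] [NormedSpace ℝ E]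
    (D : Set E) (x : E) : Set E :=
  {w | x ∈ D ∧ ∃ v ws : ℕ → E,
    Tendsto v atTop (𝓝 x) ∧ Tendsto ws atTop (𝓝 w) ∧
    ∀ j, ∃ t : ℝ, ∃ p, 0 ≤ t ∧ p ∈ projSet D (v j) ∧ ws j = t • (v j - p)}

/-- The normal cone (of convex analysis) to the convex set `C` at `y`, empty outside `C`. -/
def convNormalCone {E : Type*} [NormedAddCommGroup E] [InnerProductSpace ℝ E]
    (C : Set E) (y : E) : Set E :=
  {l | y ∈ C ∧ ∀ c ∈ C, ⟪l, c - y⟫ ≤ 0}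

variable {X Y : Type*} [NormedAddCommGroup X] [InnerProductSpace ℝ X] [FiniteDimensional ℝ X]
  [NormedAddCommGroup Y] [InnerProductSpace ℝ Y] [FiniteDimensional ℝ Y]

/-- The partial penalty function
`q_τ(x,y) = f(x) + (τ/2) (‖x-y‖² + dist_C(G(x))²)`, where `dist_C(w) = ‖w - P_C(w)‖`
and `PC` denotes the Euclidean projection onto `C`. -/
def qpen (f : X → ℝ) (G : X → Y) (PC : Y → Y) (τ : ℝ) (x y : X) : ℝ :=
  f x + τ / 2 * (‖x - y‖ ^ 2 + ‖G x - PC (G x)‖ ^ 2)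

/-- The gradient `∇_x q_τ(x, y)` of the penalty function w.r.t. the first block. -/
def gradqx (f : X → ℝ) (G : X → Y) (PC : Y → Y) (τ : ℝ) (x y : X) : X :=
  gradient (fun u => qpen f G PC τ u y) x

section NearestPoints

variable {E : Type*} [NormedAddCommGroup E] {D : Set E} {p x : E}

theorem mem_projSet_of_tendsto {ι : Type*} {l : Filter ι} [l.NeBot] (hD : IsClosed D)
    {x p : ι → E} {xb pb : E} (hx : Tendsto x l (𝓝 xb)) (hp : Tendsto p l (𝓝 pb))
    (h : ∀ᶠ i in l, p i ∈ projSet D (x i)) : pb ∈ projSet D xb :=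
  ⟨hD.mem_of_tendsto hp (h.mono fun _ hi => hi.1), fun w hw =>
    le_of_tendsto_of_tendsto (hp.sub hx).norm (tendsto_const_nhds.sub hx).norm
      (h.mono fun _ hi => hi.2 w hw)⟩

variable [NormedSpace ℝ E]

theorem mem_projSet_add_smul_sub (hp : p ∈ projSet D x) {s : ℝ} (hs₀ : 0 ≤ s)
    (hs₁ : s ≤ 1) : p ∈ projSet D (p + s • (x - p)) := by
  refine ⟨hp.1, fun w hw => ?_⟩
  have hpz : ‖p - (p + s • (x - p))‖ = s * ‖x - p‖ := by
    rw [sub_add_cancel_left, norm_neg, norm_smul, Real.norm_of_nonneg hs₀]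
  have hxz : ‖x - (p + s • (x - p))‖ = (1 - s) * ‖x - p‖ := by
    rw [show x - (p + s • (x - p)) = (1 - s) • (x - p) by module, norm_smul,
      Real.norm_of_nonneg (sub_nonneg.2 hs₁)]
  have hpx := hp.2 w hw
  rw [norm_sub_rev p x] at hpx
  linarith [norm_sub_le_norm_sub_add_norm_sub w (p + s • (x - p)) x,
    norm_sub_rev (p + s • (x - p)) x]

theorem sub_mem_limNormalCone_of_mem_projSet (hp : p ∈ projSet D x) :
    x - p ∈ limNormalCone D p := by
  refine ⟨hp.1, fun j => p + (1 / (j + 1) : ℝ) • (x - p), fun _ => x - p, ?_,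
    tendsto_const_nhds, fun j => ⟨j + 1, p, by positivity, ?_, ?_⟩⟩
  · simpa using tendsto_const_nhds.add
      ((tendsto_one_div_add_atTop_nhds_zero_nat (𝕜 := ℝ)).smul_const (x - p))
  · refine mem_projSet_add_smul_sub hp (by positivity) ?_
    rw [div_le_one (by positivity)]
    linarith [j.cast_nonneg (α := ℝ)]
  · rw [add_sub_cancel_left, smul_smul, mul_one_div_cancel (by positivity), one_smul]

end NearestPoints

section Projection

variable {E : Type*} [NormedAddCommGroup E] [InnerProductSpace ℝ E] {C : Set E} {p q u v w : E}

theorem inner_sub_le_zero_of_mem_projSet (hC : Convex ℝ C) (hp : p ∈ projSet C w) {c : E}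
    (hc : c ∈ C) : ⟪w - p, c - p⟫ ≤ 0 := by
  have : Nonempty C := ⟨⟨p, hp.1⟩⟩
  refine (norm_eq_iInf_iff_real_inner_le_zero hC hp.1).1 (le_antisymm ?_ ?_) c hc
  · exact le_ciInf fun c => by simpa only [norm_sub_rev w] using hp.2 c c.2
  · exact ciInf_le (f := fun c : C => ‖w - c‖) ⟨0, fun _ ⟨_, h⟩ => h ▸ norm_nonneg _⟩
      ⟨p, hp.1⟩

theorem norm_sub_le_of_mem_projSet (hC : Convex ℝ C) (hp : p ∈ projSet C u)
    (hq : q ∈ projSet C v) : ‖p - q‖ ≤ ‖u - v‖ := by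
  have hpq : ‖p - q‖ ^ 2 ≤ ⟪u - v, p - q⟫ := by
    have h₁ := inner_sub_le_zero_of_mem_projSet hC hp hq.1
    have h₂ := inner_sub_le_zero_of_mem_projSet hC hq hp.1
    rw [show u - v = (p - q) + (u - p) - (v - q) by abel, inner_sub_left, inner_add_left,
      real_inner_self_eq_norm_sq]
    rw [← neg_sub p q, inner_neg_right] at h₁
    linarith
  nlinarith [real_inner_le_norm (u - v) (p - q), norm_nonneg (p - q), norm_nonneg (u - v)]

end Projection

section Gradient

variable {E : Type*} [NormedAddCommGroup E] [InnerProductSpace ℝ E] [CompleteSpace E]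

theorem hasGradientAt_of_abs_sub_inner_le_sq {f : E → ℝ} {g x : E}
    (hf : ∀ u, |f u - f x - ⟪g, u - x⟫| ≤ ‖u - x‖ ^ 2) : HasGradientAt f g x := by
  rw [hasGradientAt_iff_isLittleO]
  refine (Asymptotics.IsBigO.of_bound 1 (Eventually.of_forall fun u => ?_)).trans_isLittleO
    ((Asymptotics.isLittleO_norm_pow_id one_lt_two).comp_tendsto
      (tendsto_sub_nhds_zero_iff.2 tendsto_id))
  simpa using hf u

theorem hasGradientAt_norm_sub_proj_sq {C : Set E} (hC : Convex ℝ C) {P : E → E}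
    (hP : ∀ w, P w ∈ projSet C w) (w : E) :
    HasGradientAt (fun u => ‖u - P u‖ ^ 2) ((2 : ℝ) • (w - P w)) w := by
  refine hasGradientAt_of_abs_sub_inner_le_sq fun u => ?_
  have hu : ‖u - P u‖ ≤ ‖u - P w‖ := by
    simpa only [norm_sub_rev u] using (hP u).2 _ (hP w).1
  have hw : ‖w - P w‖ ≤ ‖w - P u‖ := by
    simpa only [norm_sub_rev w] using (hP w).2 _ (hP u).1
  have hPuw : ⟪P u - P w, u - w⟫ ≤ ‖u - w‖ ^ 2 :=
    (real_inner_le_norm _ _).trans (by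
      nlinarith [norm_sub_le_of_mem_projSet hC (hP u) (hP w), norm_nonneg (u - w)])
  have hu' := pow_le_pow_left₀ (norm_nonneg _) hu 2
  have hw' := pow_le_pow_left₀ (norm_nonneg _) hw 2
  rw [show u - P w = (w - P w) + (u - w) by abel, norm_add_sq_real] at hu'
  rw [show w - P u = (u - P u) - (u - w) by abel, norm_sub_sq_real (u - P u)] at hw'
  have hinner :
      ⟪u - P u, u - w⟫ = ⟪w - P w, u - w⟫ + ‖u - w‖ ^ 2 - ⟪P u - P w, u - w⟫ := by
    rw [show u - P u = (w - P w) + (u - w) - (P u - P w) by abel, inner_sub_left,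
      inner_add_left, real_inner_self_eq_norm_sq]
  rw [real_inner_smul_left, abs_le]
  constructor <;> nlinarith

theorem HasGradientAt.comp_hasFDerivAt {F : Type*} [NormedAddCommGroup F] [InnerProductSpace ℝ F]
    [CompleteSpace F] {g : F → ℝ} {g' : F} {G : E → F} {G' : E →L[ℝ] F} {x : E}
    (hg : HasGradientAt g g' (G x)) (hG : HasFDerivAt G G' x) :
    HasGradientAt (g ∘ G) (ContinuousLinearMap.adjoint G' g') x := by
  rw [hasGradientAt_iff_hasFDerivAt]
  refine (hg.hasFDerivAt.comp x hG).congr_fderiv ?_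
  ext v
  simp [ContinuousLinearMap.adjoint_inner_left]

theorem HasGradientAt.add {f g : E → ℝ} {f' g' x : E} (hf : HasGradientAt f f' x)
    (hg : HasGradientAt g g' x) : HasGradientAt (fun u => f u + g u) (f' + g') x := by
  rw [hasGradientAt_iff_hasFDerivAt, map_add]
  exact hf.hasFDerivAt.add hg.hasFDerivAt

theorem HasGradientAt.const_mul {f : E → ℝ} {f' x : E} (c : ℝ) (hf : HasGradientAt f f' x) :
    HasGradientAt (fun u => c * f u) (c • f') x := by
  rw [hasGradientAt_iff_hasFDerivAt, map_smul]
  exact hf.hasFDerivAt.const_mul c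

theorem hasGradientAt_norm_sub_sq (x y : E) :
    HasGradientAt (fun u => ‖u - y‖ ^ 2) ((2 : ℝ) • (x - y)) x := by
  rw [hasGradientAt_iff_hasFDerivAt]
  refine (((hasFDerivAt_id x).sub_const y).norm_sq).congr_fderiv ?_
  ext v
  simp

end Gradient

theorem tendsto_zero_of_norm_smul_le {ι E : Type*} [NormedAddCommGroup E] [NormedSpace ℝ E]
    {l : Filter ι} {τ : ι → ℝ} {s : ι → E} {B : ℝ} (hτ : Tendsto τ l atTop)
    (hs : ∀ᶠ i in l, ‖τ i • s i‖ ≤ B) : Tendsto s l (𝓝 0) := by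
  refine squeeze_zero_norm' (a := fun i => B / τ i) ?_ (tendsto_const_nhds.div_atTop hτ)
  filter_upwards [hs, hτ.eventually_gt_atTop 0] with i hi hτi
  rwa [le_div_iff₀ hτi, mul_comm, ← abs_of_pos hτi, ← Real.norm_eq_abs, ← norm_smul]

section Penalty

variable {f : X → ℝ} {G : X → Y} {C : Set Y} {PC : Y → Y}

theorem gradqx_eq (hC : Convex ℝ C) (hPC : ∀ w, PC w ∈ projSet C w) {x : X}
    (hf : DifferentiableAt ℝ f x) (hG : DifferentiableAt ℝ G x) (τ : ℝ) (y : X) :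
    gradqx f G PC τ x y = gradient f x +
      τ • (x - y + ContinuousLinearMap.adjoint (fderiv ℝ G x) (G x - PC (G x))) := by
  have h := hf.hasGradientAt.add (((hasGradientAt_norm_sub_sq x y).add
    ((hasGradientAt_norm_sub_proj_sq hC hPC (G x)).comp_hasFDerivAt
      hG.hasFDerivAt)).const_mul (τ / 2))
  refine h.gradient.trans ?_
  rw [map_smul]
  module

theorem continuous_adjoint_fderiv_apply_sub_proj (hG : ContDiff ℝ 1 G) (hC : Convex ℝ C)
    (hPC : ∀ w, PC w ∈ projSet C w) :
    Continuous fun x => ContinuousLinearMap.adjoint (fderiv ℝ G x) (G x - PC (G x)) := by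
  have hPC' : LipschitzWith 1 PC := LipschitzWith.of_dist_le_mul fun u v => by
    simpa [dist_eq_norm] using norm_sub_le_of_mem_projSet hC (hPC u) (hPC v)
  exact (ContinuousLinearMap.adjoint.continuous.comp (hG.continuous_fderiv one_ne_zero)).clm_apply
    (hG.continuous.sub (hPC'.continuous.comp hG.continuous))


theorem adjoint_fderiv_apply_sub_proj_add_sub_eq_zero_of_tendsto {ι : Type*} {l : Filter ι}
    [l.NeBot]     (hf : ContDiff ℝ 1 f) (hG : ContDiff ℝ 1 G) (hC : Convex ℝ C)
    (hPC : ∀ w, PC w ∈ projSet C w) {τ δ : ι → ℝ} {M : ℝ} (hτ : Tendsto τ l atTop)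
    (hδ : ∀ i, δ i ≤ M) {x y : ι → X} {xb yb : X} (hx : Tendsto x l (𝓝 xb))
    (hy : Tendsto y l (𝓝 yb))
    (hgrad : ∀ᶠ i in l, ‖gradqx f G PC (τ i) (x i) (y i)‖ ≤ δ i) :
    ContinuousLinearMap.adjoint (fderiv ℝ G xb) (G xb - PC (G xb)) + xb - yb = 0 := by
  set r : X → X := fun u => ContinuousLinearMap.adjoint (fderiv ℝ G u) (G u - PC (G u))
  have hr : Tendsto (fun i => r (x i) + x i - y i) l (𝓝 (r xb + xb - yb)) :=
    (((continuous_adjoint_fderiv_apply_sub_proj hG hC hPC).tendsto xb).comp hx |>.add hx).sub hy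
  have hgradf : Tendsto (fun i => gradient f (x i)) l (𝓝 (gradient f xb)) :=
    ((InnerProductSpace.toDual ℝ X).symm.continuous.comp
      (hf.continuous_fderiv one_ne_zero)).tendsto xb |>.comp hx
  refine tendsto_nhds_unique hr
    (tendsto_zero_of_norm_smul_le hτ (B := M + (‖gradient f xb‖ + 1)) ?_)
  filter_upwards [hgrad, hgradf.norm.eventually (gt_mem_nhds (lt_add_one _))] with i hi hfi
  have hres : τ i • (r (x i) + x i - y i) =
      gradqx f G PC (τ i) (x i) (y i) - gradient f (x i) := by
    rw [gradqx_eq hC hPC (hf.differentiable one_ne_zero _) (hG.differentiable one_ne_zero _)]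
    module
  rw [hres]
  exact (norm_sub_le _ _).trans (add_le_add (hi.trans (hδ i)) hfi.le)

end Penalty

theorem pd_accumulation_point_feasibility_stationarity_general
    (f : X → ℝ) (G : X → Y) (C : Set Y) (D : Set X)
    (hf : ContDiff ℝ 1 f) (hG : ContDiff ℝ 1 G)
    (hCconv : Convex ℝ C) (hDcl : IsClosed D)
    (PC : Y → Y) (hPC : ∀ w, PC w ∈ C ∧ ∀ c ∈ C, ‖PC w - w‖ ≤ ‖c - w‖)
    (δ τs : ℕ → ℝ) (hδbd : ∃ Mb : ℝ, ∀ k, δ k ≤ Mb) (hτ : Tendsto τs atTop atTop)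
    (x y : ℕ → X)
    (halg : ∀ k, ‖gradqx f G PC (τs k) (x (k + 1)) (y (k + 1))‖ ≤ δ k ∧
      y (k + 1) ∈ projSet D (x (k + 1)))
    (xb yb : X) (φ : ℕ → ℕ) (hφ : StrictMono φ)
    (hxb : Tendsto (fun j => x (φ j)) atTop (𝓝 xb))
    (hyb : Tendsto (fun j => y (φ j)) atTop (𝓝 yb)) :
    ContinuousLinearMap.adjoint (fderiv ℝ G xb) (G xb - PC (G xb)) + xb - yb = 0 ∧
      ∃ w ∈ limNormalCone D yb, yb - xb + w = 0 := by
  obtain ⟨M, hM⟩ := hδbd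
  -- `halg` speaks about `x (k + 1)`: reindex by `k = φ j - 1`, valid once `φ j ≥ 1`.
  have hstep : ∀ᶠ j in atTop,
      ‖gradqx f G PC (τs (φ j - 1)) (x (φ j)) (y (φ j))‖ ≤ δ (φ j - 1) ∧
        y (φ j) ∈ projSet D (x (φ j)) := by
    filter_upwards [hφ.tendsto_atTop.eventually_ge_atTop 1] with j hj
    simpa only [Nat.sub_add_cancel hj] using halg (φ j - 1)
  have hτφ : Tendsto (fun j => τs (φ j - 1)) atTop atTop :=
    hτ.comp ((tendsto_sub_atTop_nat 1).comp hφ.tendsto_atTop)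
  have hproj : yb ∈ projSet D xb :=
    mem_projSet_of_tendsto hDcl hxb hyb (hstep.mono fun _ h => h.2)
  exact ⟨adjoint_fderiv_apply_sub_proj_add_sub_eq_zero_of_tendsto hf hG hCconv hPC hτφ
      (fun _ => hM _) hxb hyb (hstep.mono fun _ h => h.1),
    xb - yb, sub_mem_limNormalCone_of_mem_projSet hproj, by abel⟩

/-- accumulation points of the inexact penalty decomposition method are
M-stationary points of the feasibility problem
`min (1/2) dist_C(G(x))² + (1/2)‖x - y‖²  s.t. y ∈ D`. -/
theorem pd_accumulation_point_feasibility_stationarity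
    (f : X → ℝ) (G : X → Y) (C : Set Y) (D : Set X)
    (hf : ContDiff ℝ 1 f) (hG : ContDiff ℝ 1 G)
    (hCne : C.Nonempty) (hCcl : IsClosed C) (hCconv : Convex ℝ C)
    (hDne : D.Nonempty) (hDcl : IsClosed D)
    (PC : Y → Y) (hPC : ∀ w, PC w ∈ C ∧ ∀ c ∈ C, ‖PC w - w‖ ≤ ‖c - w‖)
    (δ τs : ℕ → ℝ) (hδnn : ∀ k, 0 ≤ δ k) (hδbd : ∃ Mb : ℝ, ∀ k, δ k ≤ Mb)
    (hτpos : ∀ k, 0 < τs k) (hτ : Tendsto τs atTop atTop)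
    (x y : ℕ → X)
    (halg : ∀ k, ‖gradqx f G PC (τs k) (x (k + 1)) (y (k + 1))‖ ≤ δ k ∧
      y (k + 1) ∈ projSet D (x (k + 1)))
    (xb yb : X) (φ : ℕ → ℕ) (hφ : StrictMono φ)
    (hxb : Tendsto (fun j => x (φ j)) atTop (𝓝 xb))
    (hyb : Tendsto (fun j => y (φ j)) atTop (𝓝 yb)) :
    ContinuousLinearMap.adjoint (fderiv ℝ G xb) (G xb - PC (G xb)) + xb - yb = 0 ∧
      ∃ w ∈ limNormalCone D yb, yb - xb + w = 0 :=
  pd_accumulation_point_feasibility_stationarity_general f G C D hf hG hCconv hDcl PC hPC δ τs hδbd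
    hτ x y halg xb yb φ hφ hxb hyb
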